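/- Every GML formula of modal depth n is logically equivalent over finite pointed Π-labeled graphs to an at most countable disjunction of full graded Π-types of modal depth n. -/

import Mathlib

/-- A finite directed node-labeled graph: finite node set `V`, out-neighbour
finsets `adj v`, and a labeling of nodes by sets of node label symbols from `α`. -/
structure LGraph (α : Type) : Type 1 where
  V : Type
  fintypeV : Fintype V
  adj : V → Finset V
  label : V → Set α

attribute [instance] LGraph.fintypeV

/-- Formulas of graded modal logic GML over node label symbols `α`:
`⊤`, labels, negation, conjunction, and graded diamonds `◇_{≥k}`. -/
inductive GML (α : Type) : Type where
  | top : GML α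
  | lab : α → GML α
  | neg : GML α → GML α
  | and : GML α → GML α → GML α
  | dia : ℕ → GML α → GML α

/-- Truth of a GML formula at a node of a labeled graph; `dia k φ` (`◇_{≥k}φ`)
holds iff at least `k` out-neighbours satisfy `φ`. -/
def GML.sat {α : Type} (G : LGraph α) : GML α → G.V → Prop
  | .top, _ => True
  | .lab p, v => p ∈ G.label v
  | .neg φ, v => ¬ GML.sat G φ v
  | .and φ ψ, v => GML.sat G φ v ∧ GML.sat G ψ v
  | .dia k φ, v => ∃ s : Finset G.V, s ⊆ G.adj v ∧ k ≤ s.card ∧ ∀ u ∈ s, GML.sat G φ u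

/-- `⊥` as a GML formula. -/
def GML.bot {α : Type} : GML α := .neg .top

/-- `□φ := ¬◇_{≥1}¬φ`. -/
def GML.box {α : Type} (φ : GML α) : GML α := .neg (.dia 1 (.neg φ))

/-- `◇_{=n}φ := ◇_{≥n}φ ∧ ¬◇_{≥n+1}φ`. -/
def GML.diaEq {α : Type} (n : ℕ) (φ : GML α) : GML α := .and (.dia n φ) (.neg (.dia (n + 1) φ))

/-- Schemata of GMSC over node label symbols `α` and head predicates (schema variables) `ν`. -/
inductive Schema (α ν : Type) : Type where
  | top : Schema α ν
  | lab : α → Schema α ν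
  | var : ν → Schema α ν
  | neg : Schema α ν → Schema α ν
  | and : Schema α ν → Schema α ν → Schema α ν
  | dia : ℕ → Schema α ν → Schema α ν

/-- Substituting a GML formula for each head predicate of a schema. -/
def Schema.subst {α ν : Type} (σ : ν → GML α) : Schema α ν → GML α
  | .top => .top
  | .lab p => .lab p
  | .var X => σ X
  | .neg φ => .neg (φ.subst σ)
  | .and φ ψ => .and (φ.subst σ) (ψ.subst σ)
  | .dia k φ => .dia k (φ.subst σ)

/-- A GMSC program over node label symbols `α` with head predicates `ν`:
terminal clauses `X(0) :− term X`, iteration clauses `X :− iter X`, and a set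
`app` of appointed predicates. -/
structure Program (α ν : Type) where
  term : ν → GML α
  iter : ν → Schema α ν
  app : Set ν

/-- The `n`-th iteration formula `Xⁿ` of a head predicate `X`: `X⁰` is the terminal body,
and `X^{n+1}` is the iteration body with each head predicate `Y` replaced by `Yⁿ`. -/
def Program.iterFormula {α ν : Type} (P : Program α ν) : ℕ → ν → GML α
  | 0 => P.term
  | n + 1 => fun X => (P.iter X).subst (P.iterFormula n)

/-- The program accepts `(G, w)` iff some appointed predicate's iteration formula is
true at `w` in some round. -/
def Program.accepts {α ν : Type} (P : Program α ν) (G : LGraph α) (w : G.V) : Prop :=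
  ∃ X ∈ P.app, ∃ n : ℕ, GML.sat G (P.iterFormula n X) w

/-- The modal depth of a GML formula: maximal nesting of graded diamonds. -/
def GML.mdepth {α : Type} : GML α → ℕ
  | .top => 0
  | .lab _ => 0
  | .neg φ => φ.mdepth
  | .and φ ψ => max φ.mdepth ψ.mdepth
  | .dia _ φ => φ.mdepth + 1

/-- Finite conjunction of a list of GML formulas. -/
def bigAnd {α : Type} : List (GML α) → GML α
  | [] => .top
  | φ :: l => .and φ (bigAnd l)

/-- The depth-0 part of a type as a GML formula: the conjunction over `p ∈ α` of `p` or `¬p`. -/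
noncomputable def baseFormula {α : Type} [Fintype α] [DecidableEq α] (t : α → Bool) : GML α :=
  bigAnd ((Finset.univ : Finset α).toList.map fun p =>
    if t p then GML.lab p else GML.neg (GML.lab p))

/-- Abstract data of a full graded `α`-type: at depth 0, which labels hold; at depth `n+1`,
the depth-0 data, a finitely supported function giving for each depth-`n` full type the exact
number of out-neighbours of that type, and the total number of out-neighbours. -/
def FullTD (α : Type) : ℕ → Type
  | 0 => α → Bool
  | n + 1 => (α → Bool) × (FullTD α n →₀ ℕ) × ℕ

/-- The GML formula of a full graded `α`-type of modal depth `n`: at depth `n+1`, the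
conjunction of the depth-0 type with the conjuncts `◇_{=ℓ}τ` for each depth-`n` full type `τ`
realized by exactly `ℓ ≥ 1` out-neighbours, together with `◇_{=m}⊤` where `m` is the total
number of out-neighbours. -/
noncomputable def FullTD.toFormula {α : Type} [Fintype α] [DecidableEq α] :
    ∀ {n : ℕ}, FullTD α n → GML α
  | 0, t => baseFormula t
  | n + 1, t =>
    GML.and (baseFormula t.1)
      (GML.and
        (bigAnd (t.2.1.support.toList.map fun τ =>
          GML.diaEq (t.2.1 τ) (FullTD.toFormula τ)))
        (GML.diaEq t.2.2 GML.top))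

/-! The full type of a node at depth `n + 1` (its labels together with the multiset of depth-`n`
full types of its out-neighbours) decides every formula of modal depth at most `n + 1`, and the
formula of a realized type holds exactly at the nodes of that type. So `φ` is equivalent to the
disjunction of the formulas of the types realized at models of `φ`, and there are only countably
many types. -/

open Finset
open scoped Classical

theorem Multiset.eq_iff_count_eq_of_mem_and_card_eq {β : Type*} {s t : Multiset β} :
    t = s ↔ (∀ a ∈ s, t.count a = s.count a) ∧ card t = card s := by
  refine ⟨by rintro rfl; simp, fun ⟨hcount, hcard⟩ => (eq_of_le_of_card_le ?_ hcard.le).symm⟩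
  refine le_iff_count.2 fun a => ?_
  by_cases ha : a ∈ s
  · exact (hcount a ha).ge
  · simp [count_eq_zero_of_notMem ha]

instance FullTD.countable (α : Type) [Finite α] : ∀ n, Countable (FullTD α n)
  | 0 => inferInstanceAs (Countable (α → Bool))
  | n + 1 =>
    have := FullTD.countable α n
    inferInstanceAs (Countable ((α → Bool) × (FullTD α n →₀ ℕ) × ℕ))

namespace LGraph

variable {α : Type} (G : LGraph α)

noncomputable def labelType (w : G.V) : α → Bool := fun p => decide (p ∈ G.label w)

noncomputable def fullType : (n : ℕ) → G.V → FullTD α n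
  | 0, w => G.labelType w
  | n + 1, w => (G.labelType w, ((G.adj w).val.map (fullType n)).toFinsupp, (G.adj w).card)

noncomputable def neighbourTypes (n : ℕ) (w : G.V) : Multiset (FullTD α n) :=
  (G.adj w).val.map (G.fullType n)

theorem fullType_succ (n : ℕ) (w : G.V) :
    G.fullType (n + 1) w = (G.labelType w, (G.neighbourTypes n w).toFinsupp, (G.adj w).card) :=
  rfl

theorem card_neighbourTypes (n : ℕ) (w : G.V) :
    Multiset.card (G.neighbourTypes n w) = (G.adj w).card :=
  Multiset.card_map _ _

theorem card_filter_adj_fullType {n : ℕ} (p : FullTD α n → Prop) (w : G.V) :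
    #{u ∈ G.adj w | p (G.fullType n u)} = Multiset.card ((G.neighbourTypes n w).filter p) := by
  rw [neighbourTypes, Multiset.filter_map, Multiset.card_map]
  rfl

theorem count_neighbourTypes {n : ℕ} (σ : FullTD α n) (w : G.V) :
    (G.neighbourTypes n w).count σ = #{u ∈ G.adj w | G.fullType n u = σ} := by
  rw [Multiset.count_eq_card_filter_eq, card_filter_adj_fullType G (· = σ)]
  simp only [eq_comm]

variable {G}

theorem fullType_succ_eq_iff {G' : LGraph α} {n : ℕ} {w : G.V} {w' : G'.V} :
    G'.fullType (n + 1) w' = G.fullType (n + 1) w ↔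
      G'.labelType w' = G.labelType w ∧ G'.neighbourTypes n w' = G.neighbourTypes n w := by
  rw [fullType_succ, fullType_succ]
  change ((_, _, _) : (α → Bool) × (FullTD α n →₀ ℕ) × ℕ) = (_, _, _) ↔ _
  rw [Prod.mk.injEq, Prod.mk.injEq, EmbeddingLike.apply_eq_iff_eq]
  refine and_congr_right fun _ => and_iff_left_of_imp fun h => ?_
  rw [← card_neighbourTypes, h, card_neighbourTypes]

end LGraph

namespace GML

variable {α : Type} {G : LGraph α}

theorem sat_and {φ ψ : GML α} {w : G.V} :
    GML.sat G (.and φ ψ) w ↔ GML.sat G φ w ∧ GML.sat G ψ w :=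
  Iff.rfl

theorem sat_bigAnd {l : List (GML α)} {w : G.V} :
    GML.sat G (bigAnd l) w ↔ ∀ ψ ∈ l, GML.sat G ψ w := by
  induction l with
  | nil => simp [bigAnd, GML.sat]
  | cons φ l ih => simp [bigAnd, GML.sat, ih]

theorem sat_dia_iff_le_card {k : ℕ} {φ : GML α} {w : G.V} :
    GML.sat G (.dia k φ) w ↔ k ≤ #{u ∈ G.adj w | GML.sat G φ u} := by
  constructor
  · rintro ⟨s, hs, hk, hsat⟩
    exact hk.trans (card_le_card fun u hu => mem_filter.2 ⟨hs hu, hsat u hu⟩)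
  · intro h
    exact ⟨_, filter_subset _ _, h, fun u hu => (mem_filter.1 hu).2⟩

theorem sat_diaEq_iff {k : ℕ} {φ : GML α} {w : G.V} :
    GML.sat G (diaEq k φ) w ↔ #{u ∈ G.adj w | GML.sat G φ u} = k := by
  change GML.sat G (.dia k φ) w ∧ ¬GML.sat G (.dia (k + 1) φ) w ↔ _
  rw [sat_dia_iff_le_card, sat_dia_iff_le_card]
  omega

theorem sat_diaEq_top_iff {k : ℕ} {w : G.V} :
    GML.sat G (diaEq k top) w ↔ (G.adj w).card = k := by
  rw [sat_diaEq_iff, filter_true_of_mem]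
  exact fun _ _ => trivial

theorem sat_baseFormula_iff [Fintype α] [DecidableEq α] {t : α → Bool} {w : G.V} :
    GML.sat G (baseFormula t) w ↔ G.labelType w = t := by
  simp only [baseFormula, sat_bigAnd, List.mem_map, Finset.mem_toList, Finset.mem_univ,
    true_and, forall_exists_index, forall_apply_eq_imp_iff, funext_iff, LGraph.labelType]
  refine forall_congr' fun p => ?_
  cases t p <;> simp [GML.sat]

def satTypes (φ : GML α) (n : ℕ) : Set (FullTD α n) :=
  {τ | ∃ (G : LGraph α) (w : G.V), G.fullType n w = τ ∧ GML.sat G φ w}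

theorem sat_iff_fullType_mem_satTypes {φ : GML α} {n : ℕ}
    (hinv : ∀ (G G' : LGraph α) (w : G.V) (w' : G'.V),
      G.fullType n w = G'.fullType n w' → GML.sat G φ w → GML.sat G' φ w')
    {w : G.V} : GML.sat G φ w ↔ G.fullType n w ∈ φ.satTypes n :=
  ⟨fun h => ⟨G, w, rfl, h⟩, fun ⟨G', w', hτ, h⟩ => hinv G' G w' w hτ h⟩

theorem sat_iff_of_fullType_eq {φ : GML α} {n : ℕ} (hd : φ.mdepth ≤ n) {G' : LGraph α}
    {w : G.V} {w' : G'.V} (h : G.fullType n w = G'.fullType n w') :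
    GML.sat G φ w ↔ GML.sat G' φ w' := by
  induction φ generalizing n G G' with
  | top => exact Iff.rfl
  | lab p =>
    have hlab : G.labelType w = G'.labelType w' := by
      cases n with
      | zero => exact h
      | succ n => exact congrArg Prod.fst h
    simpa [GML.sat, LGraph.labelType] using congrFun hlab p
  | neg φ ih => exact not_congr (ih hd h)
  | and φ ψ ihφ ihψ =>
    rw [mdepth, max_le_iff] at hd
    exact and_congr (ihφ hd.1 h) (ihψ hd.2 h)
  | dia k φ ih =>
    rw [mdepth] at hd
    obtain ⟨m, rfl⟩ : ∃ m, n = m + 1 := ⟨n - 1, by omega⟩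
    have hφ : ∀ (H : LGraph α) (v : H.V), GML.sat H φ v ↔ H.fullType m v ∈ φ.satTypes m :=
      fun H v => sat_iff_fullType_mem_satTypes fun _ _ _ _ he => (ih (by omega) he).1
    have hnb := (LGraph.fullType_succ_eq_iff.1 h.symm).2
    simp only [sat_dia_iff_le_card, hφ, LGraph.card_filter_adj_fullType, hnb]

end GML

section FullTypes

variable {α : Type} [Fintype α] [DecidableEq α]

theorem FullTD.toFormula_succ {n : ℕ} (t : FullTD α (n + 1)) :
    t.toFormula = .and (baseFormula t.1) (.and
      (bigAnd (t.2.1.support.toList.map fun τ => GML.diaEq (t.2.1 τ) τ.toFormula))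
      (GML.diaEq t.2.2 .top)) :=
  rfl

/- Only realized types are characterized by their formulas: a datum whose counts do not add up
to its total number of out-neighbours is also satisfied at nodes of other types. -/
theorem LGraph.sat_toFormula_fullType_iff (n : ℕ) {G G' : LGraph α} {w : G.V} {w' : G'.V} :
    GML.sat G' (G.fullType n w).toFormula w' ↔ G'.fullType n w' = G.fullType n w := by
  induction n generalizing G G' with
  | zero => exact GML.sat_baseFormula_iff
  | succ n ih =>
    have hcount : ∀ σ ∈ G.neighbourTypes n w,
        #{u ∈ G'.adj w' | GML.sat G' σ.toFormula u} = (G'.neighbourTypes n w').count σ := by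
      rintro σ hσ
      obtain ⟨u₀, -, rfl⟩ := Multiset.mem_map.1 hσ
      simp only [ih, count_neighbourTypes]
    rw [FullTD.toFormula_succ, fullType_succ_eq_iff, Multiset.eq_iff_count_eq_of_mem_and_card_eq]
    simp only [fullType_succ, GML.sat_and, GML.sat_baseFormula_iff, GML.sat_bigAnd, List.mem_map,
      Finset.mem_toList, Multiset.toFinsupp_support, Multiset.mem_toFinset,
      Multiset.toFinsupp_apply, forall_exists_index, and_imp, forall_apply_eq_imp_iff₂,
      card_neighbourTypes]
    refine and_congr_right fun _ => and_congr (forall₂_congr fun σ hσ => ?_) GML.sat_diaEq_top_iff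
    rw [GML.sat_diaEq_iff, hcount σ hσ]

end FullTypes

/-- Every GML formula of modal depth (at most) `n` is logically equivalent
over finite pointed `α`-labeled graphs to an at most countable disjunction of full graded
`α`-types of modal depth `n`. -/
theorem gml_equivalent_to_countable_disjunction_of_full_types
    {α : Type} [Fintype α] [DecidableEq α] (n : ℕ) (φ : GML α) (hd : φ.mdepth ≤ n) :
    ∃ T : Set (FullTD α n), T.Countable ∧ ∀ (G : LGraph α) (w : G.V),
      GML.sat G φ w ↔ ∃ τ ∈ T, GML.sat G (FullTD.toFormula τ) w := by
  refine ⟨φ.satTypes n, Set.to_countable _, fun G w => ?_⟩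
  rw [GML.sat_iff_fullType_mem_satTypes fun _ _ _ _ h => (GML.sat_iff_of_fullType_eq hd h).1]
  constructor
  · exact fun hw => ⟨_, hw, (LGraph.sat_toFormula_fullType_iff n).2 rfl⟩
  · rintro ⟨_, ⟨G₀, w₀, rfl, hφ⟩, hsat⟩
    rw [(LGraph.sat_toFormula_fullType_iff n).1 hsat]
    exact ⟨G₀, w₀, rfl, hφ⟩
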